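/- Let 0 < p < q < ∞. If a linear operator T: L_0+L_q → L_0+L_q is a contraction on the couple (L_0, L_q), then T restricts to a contraction on L_p; in particular, L_p is an interpolation space for the couple (L_0, L_q). -/

import Mathlib

open MeasureTheory ENNReal Set Filter

noncomputable section

namespace CSZ

/-- Lebesgue measure on the half line `(0,∞)`. -/
def m0 : Measure ℝ := volume.restrict (Set.Ioi (0:ℝ))

/-- The right-continuous decreasing rearrangement `μ(t,f)` of a function on `(0,∞)`:
`μ(t,f) = inf {s ≥ 0 : m({|f| > s}) ≤ t}`. -/
def mu (f : ℝ → ℝ) (t : ℝ) : ℝ :=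
  sInf {s : ℝ | 0 ≤ s ∧ m0 {x | s < |f x|} ≤ ENNReal.ofReal t}

/-- Head majorization `g ≺≺_hd f` : `∫_0^t μ(s,g) ds ≤ ∫_0^t μ(s,f) ds` for all `t > 0`. -/
def HeadMaj (g f : ℝ → ℝ) : Prop :=
  ∀ t : ℝ, 0 < t →
    ∫⁻ s in Set.Ioc (0:ℝ) t, ENNReal.ofReal (mu g s) ≤
      ∫⁻ s in Set.Ioc (0:ℝ) t, ENNReal.ofReal (mu f s)

/-- Tail majorization `g ≺≺_tl f` : `∫_t^∞ μ(s,g) ds ≤ ∫_t^∞ μ(s,f) ds` for all `t > 0`. -/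
def TailMaj (g f : ℝ → ℝ) : Prop :=
  ∀ t : ℝ, 0 < t →
    ∫⁻ s in Set.Ioi t, ENNReal.ofReal (mu g s) ≤
      ∫⁻ s in Set.Ioi t, ENNReal.ofReal (mu f s)

/-- The space `L_p(0,∞)`, `0 < p < ∞`. -/
def LpS (p : ℝ) : Set (ℝ → ℝ) :=
  {f | Measurable f ∧ ∫⁻ x, ENNReal.ofReal (|f x| ^ p) ∂m0 < ⊤}

/-- The `L_p`-norm. -/
def LpNorm (p : ℝ) (f : ℝ → ℝ) : ℝ :=
  ((∫⁻ x, ENNReal.ofReal (|f x| ^ p) ∂m0) ^ (1/p)).toReal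

/-- The space `L_∞(0,∞)`. -/
def LinftyS : Set (ℝ → ℝ) :=
  {f | Measurable f ∧ ∃ C : ℝ, ∀ᵐ x ∂m0, |f x| ≤ C}

/-- The `L_∞`-norm (essential supremum). -/
def LinftyNorm (f : ℝ → ℝ) : ℝ :=
  (essSup (fun x => ENNReal.ofReal |f x|) m0).toReal

/-- The space `L_0(0,∞)` of measurable functions with support of finite measure. -/
def L0S : Set (ℝ → ℝ) :=
  {f | Measurable f ∧ m0 (Function.support f) < ⊤}

/-- The group "norm" on `L_0` : `‖f‖_0 = m(supp f)`. -/
def L0Norm (f : ℝ → ℝ) : ℝ := (m0 (Function.support f)).toReal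

/-- The sum `X + Y` of two sets of functions. -/
def sumSet (X Y : Set (ℝ → ℝ)) : Set (ℝ → ℝ) :=
  {f | ∃ g ∈ X, ∃ h ∈ Y, f = g + h}

/-- A quasi-Banach function space on `(0,∞)` : a linear space of measurable functions,
equipped with a complete quasi-norm, such that `f ∈ E`, `g` measurable and `|g| ≤ |f|`
imply `g ∈ E` and `‖g‖_E ≤ ‖f‖_E`. -/
structure QBFS where
  carrier : Set (ℝ → ℝ)
  qnorm : (ℝ → ℝ) → ℝ
  measurable_mem : ∀ f ∈ carrier, Measurable f
  zero_mem : (0 : ℝ → ℝ) ∈ carrier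
  add_mem : ∀ f ∈ carrier, ∀ g ∈ carrier, f + g ∈ carrier
  smul_mem : ∀ (c : ℝ), ∀ f ∈ carrier, c • f ∈ carrier
  qnorm_nonneg : ∀ f, 0 ≤ qnorm f
  qnorm_eq_zero : ∀ f ∈ carrier, qnorm f = 0 → f = 0
  qnorm_smul : ∀ (c : ℝ) (f : ℝ → ℝ), qnorm (c • f) = |c| * qnorm f
  quasi_triangle : ∃ C : ℝ, 1 ≤ C ∧ ∀ f g, qnorm (f + g) ≤ C * (qnorm f + qnorm g)
  ideal : ∀ f ∈ carrier, ∀ g : ℝ → ℝ, Measurable g →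
    (∀ x, |g x| ≤ |f x|) → g ∈ carrier ∧ qnorm g ≤ qnorm f
  complete : ∀ u : ℕ → ℝ → ℝ, (∀ n, u n ∈ carrier) →
    (∀ ε : ℝ, 0 < ε → ∃ N : ℕ, ∀ j ≥ N, ∀ k ≥ N, qnorm (u j - u k) < ε) →
    ∃ f ∈ carrier, ∀ ε : ℝ, 0 < ε → ∃ N : ℕ, ∀ n ≥ N, qnorm (u n - f) < ε

/-- `T` is linear on the subspace `S`. -/
def IsLinearOn (T : (ℝ → ℝ) → (ℝ → ℝ)) (S : Set (ℝ → ℝ)) : Prop :=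
  (∀ f ∈ S, ∀ g ∈ S, T (f + g) = T f + T g) ∧
  (∀ (c : ℝ), ∀ f ∈ S, T (c • f) = c • T f)

/-- `T` maps `X` into `X` with bound `M` for the (quasi-)norm `N`. -/
def BoundedWith (T : (ℝ → ℝ) → (ℝ → ℝ)) (X : Set (ℝ → ℝ)) (N : (ℝ → ℝ) → ℝ) (M : ℝ) :
    Prop :=
  ∀ f ∈ X, T f ∈ X ∧ N (T f) ≤ M * N f

/-- `T` maps `X` into `X` boundedly for the (quasi-)norm `N`. -/
def BoundedOn (T : (ℝ → ℝ) → (ℝ → ℝ)) (X : Set (ℝ → ℝ)) (N : (ℝ → ℝ) → ℝ) : Prop :=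
  ∃ M : ℝ, 0 ≤ M ∧ BoundedWith T X N M

/-- `(E, NE)` is an interpolation space for the couple `((X,NX), (Y,NY))` :
`X ∩ Y ⊆ E ⊆ X + Y` and every linear operator on `X + Y` which is bounded from `X` to `X`
and from `Y` to `Y` maps `E` into `E` boundedly. -/
def IsInterpolation (X Y : Set (ℝ → ℝ)) (NX NY : (ℝ → ℝ) → ℝ)
    (E : Set (ℝ → ℝ)) (NE : (ℝ → ℝ) → ℝ) : Prop :=
  X ∩ Y ⊆ E ∧ E ⊆ sumSet X Y ∧
  ∀ T : (ℝ → ℝ) → (ℝ → ℝ),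
    IsLinearOn T (sumSet X Y) →
    (∀ f ∈ sumSet X Y, T f ∈ sumSet X Y) →
    BoundedOn T X NX → BoundedOn T Y NY →
    BoundedOn T E NE

end CSZ

/-!
For `0 < θ < 1` and `a ≥ 0` one has `∫₀^∞ min (a, t) t^(θ-2) dt = a^θ / (θ (1 - θ))`, so by Tonelli
`∫ |g|^p` is, up to a constant, the integral of `K(t, g) = ∫ min (|g|^q, t)` against
`t^(p/q - 2) dt`. It therefore suffices to show `K(t, Tf) ≤ max (M₀, M^q) K(t, f)` for all `t > 0`,
where `M₀` and `M` bound `T` on `L_0` and `L_q`. Cutting `f` at the level set `B = {|f|^q > t}`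
writes `f = h + g` with `supp h ⊆ B` and `g ∈ L_q`, and `K(t, f) = t m(B) + ∫ |g|^q`. Since
`Tf = Th + Tg` agrees with `Tg` off `supp Th`, `K(t, Tf) ≤ t m(supp Th) + ∫ |Tg|^q`, and the two
bounds on `T` conclude. For a contraction the constant is `1`.
-/

namespace CSZ

lemma rpow_rpow_div {y p q : ℝ} (hy : 0 ≤ y) (hq : q ≠ 0) : (y ^ q) ^ (p / q) = y ^ p := by
  rw [← Real.rpow_mul hy, mul_div_cancel₀ p hq]

lemma min_le_rpow_mul_rpow {a b θ : ℝ} (ha : 0 ≤ a) (hb : 0 ≤ b) (hθ0 : 0 ≤ θ) (hθ1 : θ ≤ 1) :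
    min a b ≤ a ^ θ * b ^ (1 - θ) := by
  have hmin : 0 ≤ min a b := le_min ha hb
  calc min a b = min a b ^ θ * min a b ^ (1 - θ) := by
        rw [← Real.rpow_add' hmin (by norm_num), add_sub_cancel, Real.rpow_one]
    _ ≤ a ^ θ * b ^ (1 - θ) :=
        mul_le_mul (Real.rpow_le_rpow hmin (min_le_left a b) hθ0)
          (Real.rpow_le_rpow hmin (min_le_right a b) (by linarith)) (by positivity) (by positivity)

lemma rpow_le_one_add_rpow {y p q : ℝ} (hy : 0 ≤ y) (hp : 0 ≤ p) (hpq : p ≤ q) :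
    y ^ p ≤ 1 + y ^ q := by
  rcases le_total y 1 with hy1 | hy1
  · linarith [Real.rpow_le_one hy hy1 hp, Real.rpow_nonneg hy q]
  · linarith [Real.rpow_le_rpow_of_exponent_le hy1 hpq]

lemma lintegral_Ioi_min_mul_rpow {θ a : ℝ} (hθ0 : 0 < θ) (hθ1 : θ < 1) (ha : 0 ≤ a) :
    ∫⁻ t in Ioi (0:ℝ), ENNReal.ofReal (min a t) * ENNReal.ofReal (t ^ (θ - 2)) =
      ENNReal.ofReal (a ^ θ / (θ * (1 - θ))) := by
  rcases ha.eq_or_lt with rfl | ha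
  · rw [Real.zero_rpow hθ0.ne', zero_div, ENNReal.ofReal_zero]
    calc _ = ∫⁻ _ in Ioi (0:ℝ), 0 :=
          setLIntegral_congr_fun measurableSet_Ioi fun t ht ↦ by
            simp [min_eq_left (mem_Ioi.mp ht).le]
      _ = 0 := lintegral_zero
  have hθ1' : 1 - θ ≠ 0 := by linarith
  have head : ∫⁻ t in Ioc 0 a, ENNReal.ofReal (min a t) * ENNReal.ofReal (t ^ (θ - 2)) =
      ENNReal.ofReal (a ^ θ / θ) := by
    calc _ = ∫⁻ t in Ioc 0 a, ENNReal.ofReal (t ^ (θ - 1)) := by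
          refine setLIntegral_congr_fun measurableSet_Ioc fun t ht ↦ ?_
          rw [min_eq_right ht.2, ← ENNReal.ofReal_mul ht.1.le,
            ← Real.rpow_one_add' ht.1.le (by linarith)]
          ring_nf
      _ = ENNReal.ofReal (a ^ θ / θ) := by
          rw [← ofReal_integral_eq_lintegral_ofReal
              (intervalIntegral.intervalIntegrable_rpow' (by linarith)).1
              (ae_restrict_of_forall_mem measurableSet_Ioc fun t ht ↦ Real.rpow_nonneg ht.1.le _),
            ← intervalIntegral.integral_of_le ha.le, integral_rpow (Or.inl (by linarith)),
            sub_add_cancel, Real.zero_rpow hθ0.ne', sub_zero]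
  have tail : ∫⁻ t in Ioi a, ENNReal.ofReal (min a t) * ENNReal.ofReal (t ^ (θ - 2)) =
      ENNReal.ofReal (a ^ θ / (1 - θ)) := by
    calc _ = ∫⁻ t in Ioi a, ENNReal.ofReal a * ENNReal.ofReal (t ^ (θ - 2)) :=
          setLIntegral_congr_fun measurableSet_Ioi fun t ht ↦ by rw [min_eq_left (le_of_lt ht)]
      _ = ENNReal.ofReal a * ENNReal.ofReal (∫ t in Ioi a, t ^ (θ - 2)) := by
          rw [lintegral_const_mul' _ _ ENNReal.ofReal_ne_top, ofReal_integral_eq_lintegral_ofReal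
            (integrableOn_Ioi_rpow_of_lt (by linarith) ha)
            (ae_restrict_of_forall_mem measurableSet_Ioi fun t ht ↦
              Real.rpow_nonneg (ha.trans ht).le _)]
      _ = _ := by
          rw [integral_Ioi_rpow_of_lt (by linarith) ha, ← ENNReal.ofReal_mul ha.le,
            show θ - 2 + 1 = θ - 1 by ring, Real.rpow_sub_one ha.ne']
          have : θ - 1 ≠ 0 := by linarith
          congr 1
          field_simp
          ring
  rw [← Ioc_union_Ioi_eq_Ioi ha.le, lintegral_union measurableSet_Ioi Ioc_disjoint_Ioi_same, head,
    tail, ← ENNReal.ofReal_add (by positivity) (div_nonneg (by positivity) (by linarith))]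
  congr 1
  field_simp
  ring

section MinIntegral

variable {α : Type*} [MeasurableSpace α] {μ : Measure α}

lemma lintegral_Ioi_lintegral_min_mul_rpow [SFinite μ] {θ : ℝ} (hθ0 : 0 < θ) (hθ1 : θ < 1)
    {F : α → ℝ} (hF : Measurable F) (hF0 : ∀ x, 0 ≤ F x) :
    ∫⁻ t in Ioi (0:ℝ), (∫⁻ x, ENNReal.ofReal (min (F x) t) ∂μ) * ENNReal.ofReal (t ^ (θ - 2)) =
      ENNReal.ofReal ((θ * (1 - θ))⁻¹) * ∫⁻ x, ENNReal.ofReal (F x ^ θ) ∂μ := by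
  calc _ = ∫⁻ t in Ioi (0:ℝ), ∫⁻ x,
        ENNReal.ofReal (min (F x) t) * ENNReal.ofReal (t ^ (θ - 2)) ∂μ :=
        lintegral_congr fun t ↦
          (lintegral_mul_const _ (hF.min measurable_const).ennreal_ofReal).symm
    _ = ∫⁻ x, (∫⁻ t in Ioi (0:ℝ),
        ENNReal.ofReal (min (F x) t) * ENNReal.ofReal (t ^ (θ - 2))) ∂μ :=
        lintegral_lintegral_swap (by fun_prop)
    _ = ∫⁻ x, ENNReal.ofReal ((θ * (1 - θ))⁻¹) * ENNReal.ofReal (F x ^ θ) ∂μ :=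
        lintegral_congr fun x ↦ by
          rw [lintegral_Ioi_min_mul_rpow hθ0 hθ1 (hF0 x), div_eq_mul_inv, mul_comm,
            ENNReal.ofReal_mul (inv_pos.mpr (mul_pos hθ0 (sub_pos.mpr hθ1))).le]
    _ = _ := lintegral_const_mul _ (hF.pow_const θ).ennreal_ofReal

lemma lintegral_rpow_le_of_lintegral_min_le [SFinite μ] {θ : ℝ} (hθ0 : 0 < θ) (hθ1 : θ < 1)
    {F G : α → ℝ} (hF : Measurable F) (hG : Measurable G) (hF0 : ∀ x, 0 ≤ F x)
    (hG0 : ∀ x, 0 ≤ G x) {C : ℝ≥0∞}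
    (h : ∀ t, 0 < t → ∫⁻ x, ENNReal.ofReal (min (F x) t) ∂μ ≤
      C * ∫⁻ x, ENNReal.ofReal (min (G x) t) ∂μ) :
    ∫⁻ x, ENNReal.ofReal (F x ^ θ) ∂μ ≤ C * ∫⁻ x, ENNReal.ofReal (G x ^ θ) ∂μ := by
  have hk : ENNReal.ofReal ((θ * (1 - θ))⁻¹) ≠ 0 :=
    (ENNReal.ofReal_pos.mpr (inv_pos.mpr (mul_pos hθ0 (sub_pos.mpr hθ1)))).ne'
  have hGmono : Monotone fun t ↦ ∫⁻ x, ENNReal.ofReal (min (G x) t) ∂μ :=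
    fun s t hst ↦ lintegral_mono fun x ↦ ENNReal.ofReal_le_ofReal (min_le_min_left _ hst)
  have hmeas : Measurable fun t ↦
      (∫⁻ x, ENNReal.ofReal (min (G x) t) ∂μ) * ENNReal.ofReal (t ^ (θ - 2)) :=
    hGmono.measurable.mul (by fun_prop)
  rw [← ENNReal.mul_le_mul_iff_right hk ENNReal.ofReal_ne_top, mul_left_comm,
    ← lintegral_Ioi_lintegral_min_mul_rpow hθ0 hθ1 hF hF0,
    ← lintegral_Ioi_lintegral_min_mul_rpow hθ0 hθ1 hG hG0,
    ← lintegral_const_mul C hmeas]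
  refine setLIntegral_mono' measurableSet_Ioi fun t ht ↦ ?_
  rw [← mul_assoc]
  exact mul_le_mul_left (h t ht) _

end MinIntegral

section SuperLevel

variable {α : Type*}

def superLevel (q : ℝ) (f : α → ℝ) (t : ℝ) : Set α := {x | t < |f x| ^ q}

lemma ofReal_min_rpow_eq {q : ℝ} (hq : 0 < q) (f : α → ℝ) (t : ℝ) (x : α) :
    ENNReal.ofReal (min (|f x| ^ q) t) = (superLevel q f t).indicator (fun _ ↦ ENNReal.ofReal t) x
      + ENNReal.ofReal (|(superLevel q f t)ᶜ.indicator f x| ^ q) := by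
  by_cases hx : t < |f x| ^ q
  · have hx' : x ∈ superLevel q f t := hx
    simp [hx', min_eq_right hx.le, Real.zero_rpow hq.ne']
  · have hx' : x ∉ superLevel q f t := hx
    simp [hx', min_eq_left (not_lt.mp hx)]

variable [MeasurableSpace α] {μ : Measure α}

lemma measurableSet_superLevel {q : ℝ} {f : α → ℝ} (hf : Measurable f) (t : ℝ) :
    MeasurableSet (superLevel q f t) :=
  measurableSet_lt measurable_const (hf.abs.pow_const q)

lemma lintegral_min_rpow_eq {q : ℝ} (hq : 0 < q) {f : α → ℝ} (hf : Measurable f) (t : ℝ) :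
    ∫⁻ x, ENNReal.ofReal (min (|f x| ^ q) t) ∂μ = ENNReal.ofReal t * μ (superLevel q f t)
      + ∫⁻ x, ENNReal.ofReal (|(superLevel q f t)ᶜ.indicator f x| ^ q) ∂μ := by
  simp_rw [ofReal_min_rpow_eq hq f t]
  rw [lintegral_add_left (measurable_const.indicator (measurableSet_superLevel hf t)),
    lintegral_indicator_const (measurableSet_superLevel hf t)]

lemma lintegral_min_rpow_add_le {q : ℝ} {v : α → ℝ} (hv : Measurable v) (w : α → ℝ) (t : ℝ) :
    ∫⁻ x, ENNReal.ofReal (min (|(v + w) x| ^ q) t) ∂μ ≤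
      ENNReal.ofReal t * μ (Function.support v) + ∫⁻ x, ENNReal.ofReal (|w x| ^ q) ∂μ := by
  have hpt : ∀ x, ENNReal.ofReal (min (|(v + w) x| ^ q) t) ≤
      (Function.support v).indicator (fun _ ↦ ENNReal.ofReal t) x
        + ENNReal.ofReal (|w x| ^ q) := by
    intro x
    by_cases hx : v x = 0
    · simp [hx]
    · simp only [Function.mem_support, ne_eq, hx, not_false_eq_true, indicator_of_mem]
      exact le_add_right (ENNReal.ofReal_le_ofReal (min_le_right _ _))
  calc _ ≤ ∫⁻ x, ((Function.support v).indicator (fun _ ↦ ENNReal.ofReal t) x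
        + ENNReal.ofReal (|w x| ^ q)) ∂μ := lintegral_mono hpt
    _ = _ := by
      rw [lintegral_add_left (measurable_const.indicator (measurableSet_support hv)),
        lintegral_indicator_const (measurableSet_support hv)]

lemma lintegral_min_rpow_le {p q : ℝ} (hp : 0 < p) (hpq : p < q) (f : α → ℝ) {t : ℝ}
    (ht : 0 ≤ t) :
    ∫⁻ x, ENNReal.ofReal (min (|f x| ^ q) t) ∂μ ≤
      ENNReal.ofReal (t ^ (1 - p / q)) * ∫⁻ x, ENNReal.ofReal (|f x| ^ p) ∂μ := by
  have hq : 0 < q := hp.trans hpq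
  rw [← lintegral_const_mul' _ _ ENNReal.ofReal_ne_top]
  refine lintegral_mono fun x ↦ ?_
  rw [← ENNReal.ofReal_mul (by positivity), mul_comm,
    ← rpow_rpow_div (p := p) (abs_nonneg (f x)) hq.ne']
  exact ENNReal.ofReal_le_ofReal <| min_le_rpow_mul_rpow (by positivity) ht (by positivity)
    ((div_le_one hq).mpr hpq.le)

lemma lintegral_min_rpow_lt_top {p q : ℝ} (hp : 0 < p) (hpq : p < q) {f : α → ℝ}
    (hf : ∫⁻ x, ENNReal.ofReal (|f x| ^ p) ∂μ < ⊤) {t : ℝ} (ht : 0 ≤ t) :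
    ∫⁻ x, ENNReal.ofReal (min (|f x| ^ q) t) ∂μ < ⊤ :=
  (lintegral_min_rpow_le hp hpq f ht).trans_lt (ENNReal.mul_lt_top ENNReal.ofReal_lt_top hf)

lemma measure_superLevel_lt_top {p q : ℝ} (hp : 0 < p) (hpq : p < q) {f : α → ℝ}
    (hf : Measurable f) (hfp : ∫⁻ x, ENNReal.ofReal (|f x| ^ p) ∂μ < ⊤) {t : ℝ} (ht : 0 < t) :
    μ (superLevel q f t) < ⊤ := by
  have h := lintegral_min_rpow_lt_top hp hpq hfp ht.le
  rw [lintegral_min_rpow_eq (hp.trans hpq) hf] at h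
  exact ENNReal.lt_top_of_mul_ne_top_right (ENNReal.add_lt_top.mp h).1.ne (by simpa using ht)

lemma lintegral_indicator_compl_superLevel_lt_top {p q : ℝ} (hp : 0 < p) (hpq : p < q)
    {f : α → ℝ} (hf : Measurable f) (hfp : ∫⁻ x, ENNReal.ofReal (|f x| ^ p) ∂μ < ⊤) {t : ℝ}
    (ht : 0 ≤ t) :
    ∫⁻ x, ENNReal.ofReal (|(superLevel q f t)ᶜ.indicator f x| ^ q) ∂μ < ⊤ := by
  have h := lintegral_min_rpow_lt_top hp hpq hfp ht
  rw [lintegral_min_rpow_eq (hp.trans hpq) hf] at h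
  exact (ENNReal.add_lt_top.mp h).2

end SuperLevel

instance : SigmaFinite m0 := by unfold m0; infer_instance

lemma zero_mem_L0S : (0 : ℝ → ℝ) ∈ L0S := ⟨measurable_const, by simp⟩

lemma zero_mem_LpS {q : ℝ} (hq : 0 < q) : (0 : ℝ → ℝ) ∈ LpS q :=
  ⟨measurable_const, by simp [Real.zero_rpow hq.ne']⟩

lemma subset_sumSet_left {X Y : Set (ℝ → ℝ)} (hY : (0 : ℝ → ℝ) ∈ Y) : X ⊆ sumSet X Y :=
  fun f hf ↦ ⟨f, hf, 0, hY, (add_zero f).symm⟩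

lemma subset_sumSet_right {X Y : Set (ℝ → ℝ)} (hX : (0 : ℝ → ℝ) ∈ X) : Y ⊆ sumSet X Y :=
  fun f hf ↦ ⟨0, hX, f, hf, (zero_add f).symm⟩

lemma indicator_superLevel_mem_L0S {p q : ℝ} (hp : 0 < p) (hpq : p < q) {f : ℝ → ℝ}
    (hf : f ∈ LpS p) {t : ℝ} (ht : 0 < t) : (superLevel q f t).indicator f ∈ L0S :=
  ⟨hf.1.indicator (measurableSet_superLevel hf.1 t),
    (measure_mono Set.support_indicator_subset).trans_lt
      (measure_superLevel_lt_top hp hpq hf.1 hf.2 ht)⟩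

lemma indicator_compl_superLevel_mem_LpS {p q : ℝ} (hp : 0 < p) (hpq : p < q) {f : ℝ → ℝ}
    (hf : f ∈ LpS p) {t : ℝ} (ht : 0 ≤ t) : (superLevel q f t)ᶜ.indicator f ∈ LpS q :=
  ⟨hf.1.indicator (measurableSet_superLevel hf.1 t).compl,
    lintegral_indicator_compl_superLevel_lt_top hp hpq hf.1 hf.2 ht⟩

lemma LpS_subset_sumSet {p q : ℝ} (hp : 0 < p) (hpq : p < q) : LpS p ⊆ sumSet L0S (LpS q) :=
  fun f hf ↦ ⟨_, indicator_superLevel_mem_L0S hp hpq hf one_pos,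
    _, indicator_compl_superLevel_mem_LpS hp hpq hf zero_le_one,
    (indicator_self_add_compl _ f).symm⟩

lemma L0S_inter_LpS_subset {p q : ℝ} (hp : 0 < p) (hpq : p < q) : L0S ∩ LpS q ⊆ LpS p := by
  rintro f ⟨⟨hf, hsupp⟩, -, hfq⟩
  have hpt : ∀ x, ENNReal.ofReal (|f x| ^ p) ≤
      (Function.support f).indicator (fun _ ↦ 1) x + ENNReal.ofReal (|f x| ^ q) := by
    intro x
    by_cases hx : f x = 0
    · simp [hx, Real.zero_rpow hp.ne']
    · rw [indicator_of_mem hx, ← ENNReal.ofReal_one, ← ENNReal.ofReal_add zero_le_one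
        (by positivity)]
      exact ENNReal.ofReal_le_ofReal (rpow_le_one_add_rpow (abs_nonneg _) hp.le hpq.le)
  refine ⟨hf, (lintegral_mono hpt).trans_lt ?_⟩
  rw [lintegral_add_left (measurable_const.indicator (measurableSet_support hf)),
    lintegral_indicator_const (measurableSet_support hf), one_mul]
  exact ENNReal.add_lt_top.mpr ⟨hsupp, hfq⟩

lemma LpNorm_le_mul_iff {q M : ℝ} (hq : 0 < q) (hM : 0 ≤ M) {u v : ℝ → ℝ}
    (hu : ∫⁻ x, ENNReal.ofReal (|u x| ^ q) ∂m0 < ⊤)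
    (hv : ∫⁻ x, ENNReal.ofReal (|v x| ^ q) ∂m0 < ⊤) :
    LpNorm q u ≤ M * LpNorm q v ↔
      ∫⁻ x, ENNReal.ofReal (|u x| ^ q) ∂m0 ≤
        ENNReal.ofReal (M ^ q) * ∫⁻ x, ENNReal.ofReal (|v x| ^ q) ∂m0 := by
  have hq' : 0 < 1 / q := one_div_pos.mpr hq
  have hrhs : M * LpNorm q v = ((ENNReal.ofReal (M ^ q) * ∫⁻ x, ENNReal.ofReal (|v x| ^ q) ∂m0)
      ^ (1 / q)).toReal := by
    rw [ENNReal.mul_rpow_of_nonneg _ _ hq'.le, ENNReal.toReal_mul,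
      ENNReal.ofReal_rpow_of_nonneg (by positivity) hq'.le, ← Real.rpow_mul hM,
      mul_one_div_cancel hq.ne', Real.rpow_one, ENNReal.toReal_ofReal hM, LpNorm]
  rw [hrhs, LpNorm, ENNReal.toReal_le_toReal (ENNReal.rpow_ne_top_of_nonneg hq'.le hu.ne)
    (ENNReal.rpow_ne_top_of_nonneg hq'.le (ENNReal.mul_lt_top ENNReal.ofReal_lt_top hv).ne),
    ENNReal.rpow_le_rpow_iff hq']

lemma measure_support_map_le {T : (ℝ → ℝ) → (ℝ → ℝ)} {M : ℝ} (hM : 0 ≤ M)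
    (hT : BoundedWith T L0S L0Norm M) {f : ℝ → ℝ} (hf : f ∈ L0S) :
    m0 (Function.support (T f)) ≤ ENNReal.ofReal M * m0 (Function.support f) := by
  obtain ⟨hTf, hle⟩ := hT f hf
  rw [← ENNReal.ofReal_toReal hTf.2.ne, ← ENNReal.ofReal_toReal hf.2.ne,
    ← ENNReal.ofReal_mul hM]
  exact ENNReal.ofReal_le_ofReal hle

lemma lintegral_rpow_map_le {T : (ℝ → ℝ) → (ℝ → ℝ)} {q M : ℝ} (hq : 0 < q) (hM : 0 ≤ M)
    (hT : BoundedWith T (LpS q) (LpNorm q) M) {f : ℝ → ℝ} (hf : f ∈ LpS q) :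
    ∫⁻ x, ENNReal.ofReal (|T f x| ^ q) ∂m0 ≤
      ENNReal.ofReal (M ^ q) * ∫⁻ x, ENNReal.ofReal (|f x| ^ q) ∂m0 :=
  let ⟨hTf, hle⟩ := hT f hf
  (LpNorm_le_mul_iff hq hM hTf.2 hf.2).mp hle

section Operator

variable {p q M₀ M : ℝ} {T : (ℝ → ℝ) → (ℝ → ℝ)}

lemma map_eq_add_of_mem_LpS (hp : 0 < p) (hpq : p < q) (hlin : IsLinearOn T (sumSet L0S (LpS q)))
    {f : ℝ → ℝ} (hf : f ∈ LpS p) {t : ℝ} (ht : 0 < t) :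
    T f = T ((superLevel q f t).indicator f) + T ((superLevel q f t)ᶜ.indicator f) := by
  rw [← hlin.1 _ (subset_sumSet_left (zero_mem_LpS (hp.trans hpq))
      (indicator_superLevel_mem_L0S hp hpq hf ht))
    _ (subset_sumSet_right zero_mem_L0S (indicator_compl_superLevel_mem_LpS hp hpq hf ht.le)),
    indicator_self_add_compl]

lemma measurable_map_of_mem_LpS (hp : 0 < p) (hpq : p < q)
    (hlin : IsLinearOn T (sumSet L0S (LpS q))) (hT₀ : BoundedWith T L0S L0Norm M₀)
    (hT : BoundedWith T (LpS q) (LpNorm q) M) {f : ℝ → ℝ} (hf : f ∈ LpS p) :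
    Measurable (T f) := by
  rw [map_eq_add_of_mem_LpS hp hpq hlin hf one_pos]
  exact (hT₀ _ (indicator_superLevel_mem_L0S hp hpq hf one_pos)).1.1.add
    (hT _ (indicator_compl_superLevel_mem_LpS hp hpq hf zero_le_one)).1.1

lemma lintegral_min_rpow_map_le (hp : 0 < p) (hpq : p < q) (hM₀ : 0 ≤ M₀) (hM : 0 ≤ M)
    (hlin : IsLinearOn T (sumSet L0S (LpS q))) (hT₀ : BoundedWith T L0S L0Norm M₀)
    (hT : BoundedWith T (LpS q) (LpNorm q) M) {f : ℝ → ℝ} (hf : f ∈ LpS p) {t : ℝ}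
    (ht : 0 < t) :
    ∫⁻ x, ENNReal.ofReal (min (|T f x| ^ q) t) ∂m0 ≤
      ENNReal.ofReal (max M₀ (M ^ q)) * ∫⁻ x, ENNReal.ofReal (min (|f x| ^ q) t) ∂m0 := by
  have hq : 0 < q := hp.trans hpq
  set B := superLevel q f t
  have hhead := indicator_superLevel_mem_L0S hp hpq hf ht
  have htail := indicator_compl_superLevel_mem_LpS hp hpq hf ht.le
  have hsupp : m0 (Function.support (T (B.indicator f))) ≤ ENNReal.ofReal M₀ * m0 B :=
    (measure_support_map_le hM₀ hT₀ hhead).trans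
      (mul_le_mul_right (measure_mono Set.support_indicator_subset) _)
  have hM₀C : ENNReal.ofReal M₀ ≤ ENNReal.ofReal (max M₀ (M ^ q)) :=
    ENNReal.ofReal_le_ofReal (le_max_left _ _)
  have hMC : ENNReal.ofReal (M ^ q) ≤ ENNReal.ofReal (max M₀ (M ^ q)) :=
    ENNReal.ofReal_le_ofReal (le_max_right _ _)
  calc ∫⁻ x, ENNReal.ofReal (min (|T f x| ^ q) t) ∂m0
      ≤ ENNReal.ofReal t * m0 (Function.support (T (B.indicator f)))
        + ∫⁻ x, ENNReal.ofReal (|T (Bᶜ.indicator f) x| ^ q) ∂m0 := by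
        rw [map_eq_add_of_mem_LpS hp hpq hlin hf ht]
        exact lintegral_min_rpow_add_le (hT₀ _ hhead).1.1 _ t
    _ ≤ ENNReal.ofReal t * (ENNReal.ofReal M₀ * m0 B)
        + ENNReal.ofReal (M ^ q) * ∫⁻ x, ENNReal.ofReal (|Bᶜ.indicator f x| ^ q) ∂m0 :=
        add_le_add (mul_le_mul_right hsupp _) (lintegral_rpow_map_le hq hM hT htail)
    _ ≤ ENNReal.ofReal (max M₀ (M ^ q)) * (ENNReal.ofReal t * m0 B
        + ∫⁻ x, ENNReal.ofReal (|Bᶜ.indicator f x| ^ q) ∂m0) := by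
        rw [mul_add, mul_left_comm]
        gcongr
    _ = _ := by rw [lintegral_min_rpow_eq hq hf.1]

lemma boundedWith_LpS (hp : 0 < p) (hpq : p < q) (hM₀ : 0 ≤ M₀) (hM : 0 ≤ M)
    (hlin : IsLinearOn T (sumSet L0S (LpS q))) (hT₀ : BoundedWith T L0S L0Norm M₀)
    (hT : BoundedWith T (LpS q) (LpNorm q) M) :
    BoundedWith T (LpS p) (LpNorm p) (max M₀ (M ^ q) ^ p⁻¹) := by
  intro f hf
  have hq : 0 < q := hp.trans hpq
  have hTf := measurable_map_of_mem_LpS hp hpq hlin hT₀ hT hf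
  have hle : ∫⁻ x, ENNReal.ofReal (|T f x| ^ p) ∂m0 ≤
      ENNReal.ofReal (max M₀ (M ^ q)) * ∫⁻ x, ENNReal.ofReal (|f x| ^ p) ∂m0 := by
    simpa only [rpow_rpow_div (abs_nonneg _) hq.ne'] using
      lintegral_rpow_le_of_lintegral_min_le (div_pos hp hq) ((div_lt_one hq).mpr hpq)
        (hTf.abs.pow_const q) (hf.1.abs.pow_const q) (fun x ↦ by positivity)
        (fun x ↦ by positivity)
        (fun t ht ↦ lintegral_min_rpow_map_le hp hpq hM₀ hM hlin hT₀ hT hf ht)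
  have hmem : T f ∈ LpS p := ⟨hTf, hle.trans_lt (ENNReal.mul_lt_top ENNReal.ofReal_lt_top hf.2)⟩
  refine ⟨hmem, (LpNorm_le_mul_iff hp (by positivity) hmem.2 hf.2).mpr ?_⟩
  rwa [Real.rpow_inv_rpow (le_max_of_le_left hM₀) hp.ne']

end Operator

end CSZ

open CSZ MeasureTheory ENNReal Set in
/-- Corollary 3.5 of the paper.
Let `0 < p < q < ∞`. Every linear operator `T : L_0 + L_q → L_0 + L_q` which is a
contraction on the couple `(L_0, L_q)` restricts to a contraction on `L_p`; in particular,
`L_p` is an interpolation space for the couple `(L_0, L_q)`. -/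
theorem statement8 (p q : ℝ) (hp : 0 < p) (hpq : p < q) :
    (∀ T : (ℝ → ℝ) → (ℝ → ℝ),
      IsLinearOn T (sumSet L0S (LpS q)) →
      (∀ f ∈ sumSet L0S (LpS q), T f ∈ sumSet L0S (LpS q)) →
      BoundedWith T L0S L0Norm 1 →
      BoundedWith T (LpS q) (LpNorm q) 1 →
      BoundedWith T (LpS p) (LpNorm p) 1) ∧
    IsInterpolation L0S (LpS q) L0Norm (LpNorm q) (LpS p) (LpNorm p) := by
  refine ⟨fun T hlin _ hT₀ hT ↦ ?_, L0S_inter_LpS_subset hp hpq, LpS_subset_sumSet hp hpq, ?_⟩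
  · simpa using boundedWith_LpS hp hpq zero_le_one zero_le_one hlin hT₀ hT
  · rintro T hlin _ ⟨M₀, hM₀, hT₀⟩ ⟨M, hM, hT⟩
    exact ⟨_, by positivity, boundedWith_LpS hp hpq hM₀ hM hlin hT₀ hT⟩
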